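/- arXiv:math/0109186 — 3 statements merged into one kernel-verified Lean document; each statement's English description precedes it below -/
import Mathlib

section
/- Let X be a metric space, p ∈ X and ε > 0. Assume: (i) the closed ball of radius ε around p is compact; (ii) for every point x ∈ X and every δ > 0 there is a continuous path γ : [0,1] → X with γ(0) = p, γ(1) = x, and dist(p, γ(t)) + dist(γ(t), x) ≤ dist(p, x) + δ for all t ∈ [0,1]; (iii) for every q ∈ X with dist(p, q) = ε there exists a bijective isometry φ : X → X with φ(p) = q. Then X is a complete metric space. -/
/-!
Let `T` be the orbit of `p` under the isometry group. Every `q ∈ T` inherits from `p` a compact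
`ε`-ball and almost-geodesic paths, and hypothesis (iii) makes the sphere of radius `ε` around
`q` lie in `T`. A point `x` with `dist q x > ε` can be approached by an almost-geodesic from
`q`, which crosses that sphere at some `y` with `dist y x ≤ dist q x - 3ε/4`. Covering the
compact sphere by finitely many `ε/4`-balls, `closedBall q (r + ε/2)` lies in
`closedBall q ε` together with finitely many balls `closedBall y r`, `y ∈ T`. By induction all
closed balls around `p` are compact, so `X` is proper and hence complete.
-/

open Metric Set Filter

section

variable {X Y : Type*} [PseudoMetricSpace X] [PseudoMetricSpace Y]

def HasAlmostGeodesicsFrom (p : X) : Prop :=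
  ∀ (x : X) (δ : ℝ), 0 < δ → ∃ γ : ℝ → X, ContinuousOn γ (Icc 0 1) ∧ γ 0 = p ∧ γ 1 = x ∧
    ∀ t ∈ Icc (0 : ℝ) 1, dist p (γ t) + dist (γ t) x ≤ dist p x + δ

namespace HasAlmostGeodesicsFrom

theorem map {p : X} (h : HasAlmostGeodesicsFrom p) (φ : X ≃ᵢ Y) :
    HasAlmostGeodesicsFrom (φ p) := by
  intro x δ hδ
  obtain ⟨γ, hγc, hγ0, hγ1, hγd⟩ := h (φ.symm x) δ hδ
  refine ⟨φ ∘ γ, φ.continuous.comp_continuousOn hγc, by simp [hγ0], by simp [hγ1], ?_⟩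
  intro t ht
  simpa [← φ.dist_eq (γ t), ← φ.dist_eq p] using hγd t ht

theorem exists_dist_eq {p x : X} (h : HasAlmostGeodesicsFrom p) {r δ : ℝ} (hr : 0 ≤ r)
    (hrx : r ≤ dist p x) (hδ : 0 < δ) :
    ∃ y, dist p y = r ∧ dist y x ≤ dist p x - r + δ := by
  obtain ⟨γ, hγc, hγ0, hγ1, hγd⟩ := h x δ hδ
  have hcont : ContinuousOn (fun t => dist p (γ t)) (Icc 0 1) :=
    (continuous_const.dist continuous_id).comp_continuousOn hγc
  have hr_mem : r ∈ Icc (dist p (γ 0)) (dist p (γ 1)) := by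
    rw [hγ0, hγ1, dist_self]
    exact ⟨hr, hrx⟩
  obtain ⟨t, ht, hγt⟩ := intermediate_value_Icc zero_le_one hcont hr_mem
  refine ⟨γ t, hγt, ?_⟩
  linarith [hγd t ht]

theorem isCompact_closedBall_add {q : X} (hq : HasAlmostGeodesicsFrom q) {ε r : ℝ}
    (hε : 0 < ε) (hball : IsCompact (closedBall q ε))
    (hsphere : ∀ y ∈ sphere q ε, IsCompact (closedBall y r)) :
    IsCompact (closedBall q (r + ε / 2)) := by
  obtain ⟨F, hFS, hF, hcover⟩ :=
    (hball.of_isClosed_subset isClosed_sphere sphere_subset_closedBall).finite_cover_balls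
      (by positivity : 0 < ε / 4)
  have hsub : closedBall q (r + ε / 2) ⊆ closedBall q ε ∪ ⋃ z ∈ F, closedBall z r := by
    intro x hx
    rw [mem_closedBall, dist_comm] at hx
    rcases le_or_gt (dist q x) ε with hnear | hfar
    · exact Or.inl (mem_closedBall'.2 hnear)
    obtain ⟨y, hy, hyx⟩ := hq.exists_dist_eq hε.le hfar.le (by positivity : 0 < ε / 4)
    obtain ⟨z, hzF, hyz⟩ := mem_iUnion₂.1 (hcover (mem_sphere'.2 hy))
    refine Or.inr (mem_iUnion₂.2 ⟨z, hzF, ?_⟩)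
    rw [mem_closedBall, dist_comm]
    linarith [dist_triangle z y x, mem_ball'.1 hyz]
  exact (hball.union (hF.isCompact_biUnion fun z hz => hsphere z (hFS hz))).of_isClosed_subset
    isClosed_closedBall hsub

end HasAlmostGeodesicsFrom

theorem ProperSpace.of_isCompact_closedBall_of_sphere_subset {T : Set X} {p : X} (hp : p ∈ T)
    {ε : ℝ} (hε : 0 < ε)
    (hT : ∀ q ∈ T, HasAlmostGeodesicsFrom q ∧ IsCompact (closedBall q ε) ∧ sphere q ε ⊆ T) :
    ProperSpace X := by
  have hcompact : ∀ n : ℕ, ∀ q ∈ T, IsCompact (closedBall q (ε + n * (ε / 2))) := by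
    intro n
    induction n with
    | zero => simpa using fun q hq => (hT q hq).2.1
    | succ n ih =>
      intro q hq
      obtain ⟨hgeod, hball, hsphere⟩ := hT q hq
      have := hgeod.isCompact_closedBall_add hε hball fun y hy => ih y (hsphere hy)
      convert this using 2
      push_cast
      ring
  refine ProperSpace.of_seq_closedBall (x := p) (l := atTop) ?_ (.of_forall fun n => hcompact n p hp)
  exact tendsto_atTop_add_const_left _ _
    (tendsto_natCast_atTop_atTop.atTop_mul_const (by positivity))

def isometryOrbit (p : X) : Set X := range fun φ : X ≃ᵢ X => φ p

theorem sphere_subset_isometryOrbit {p q : X} {ε : ℝ} (hp : sphere p ε ⊆ isometryOrbit p)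
    (hq : q ∈ isometryOrbit p) : sphere q ε ⊆ isometryOrbit p := by
  obtain ⟨φ, rfl⟩ := hq
  rw [← φ.image_sphere]
  rintro _ ⟨x, hx, rfl⟩
  obtain ⟨ψ, rfl⟩ := hp hx
  exact ⟨φ * ψ, rfl⟩

end

/-- A metric space with a compact closed ball around `p`, almost-geodesic paths from `p`
to every point, and bijective isometries moving `p` to every point of the sphere of
radius `ε` around `p`, is complete. -/
theorem grauert_domain_complete {X : Type*} [MetricSpace X] (p : X) (ε : ℝ) (hε : 0 < ε)
    (hcompact : IsCompact (Metric.closedBall p ε))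
    (hpaths : ∀ (x : X) (δ : ℝ), 0 < δ →
      ∃ γ : ℝ → X, ContinuousOn γ (Set.Icc 0 1) ∧ γ 0 = p ∧ γ 1 = x ∧
        ∀ t ∈ Set.Icc (0 : ℝ) 1, dist p (γ t) + dist (γ t) x ≤ dist p x + δ)
    (hhomog : ∀ q : X, dist p q = ε →
      ∃ φ : X ≃ X, (∀ x y : X, dist (φ x) (φ y) = dist x y) ∧ φ p = q) :
    CompleteSpace X := by
  have hgeod : HasAlmostGeodesicsFrom p := hpaths
  have hsphere : sphere p ε ⊆ isometryOrbit p := by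
    intro q hq
    obtain ⟨φ, hφ, rfl⟩ := hhomog q (mem_sphere'.1 hq)
    exact ⟨⟨φ, .of_dist_eq hφ⟩, rfl⟩
  have : ProperSpace X := .of_isCompact_closedBall_of_sphere_subset (T := isometryOrbit p)
    ⟨1, rfl⟩ hε <| by
      rintro _ ⟨φ, rfl⟩
      exact ⟨hgeod.map φ, φ.image_closedBall p ε ▸ hcompact.image φ.continuous,
        sphere_subset_isometryOrbit hsphere ⟨φ, rfl⟩⟩
  exact complete_of_proper
end

section
/- For every complex number z with cosh(z) ≠ 0, one has |tanh(z)| < 1 if and only if cos(2·Im(z)) > 0. In particular, if |Im(z)| < π/4 then |tanh(z)| < 1. -/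
/-!
Since `conj (cosh z) = cosh (conj z)` and likewise for `sinh`, the addition formula gives
`|cosh z|² - |sinh z|² = cosh (z - conj z) = cosh (2i Im z) = cos (2 Im z)`.
So `|tanh z| = |sinh z| / |cosh z| < 1` exactly when `cos (2 Im z) > 0`, which holds
whenever `|2 Im z| < π/2`.
-/

open Complex ComplexConjugate

theorem Complex.normSq_cosh_sub_normSq_sinh (z : ℂ) :
    normSq (cosh z) - normSq (sinh z) = Real.cos (2 * z.im) := by
  apply ofReal_injective
  calc ((normSq (cosh z) - normSq (sinh z) : ℝ) : ℂ)
      = cosh z * cosh (conj z) - sinh z * sinh (conj z) := by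
        rw [cosh_conj, sinh_conj, mul_conj, mul_conj, ofReal_sub]
    _ = cosh ((2 * z.im : ℝ) * I) := by rw [← cosh_sub, sub_conj]
    _ = Real.cos (2 * z.im) := by rw [cosh_mul_I, ofReal_cos]

theorem Complex.norm_tanh_lt_one_iff_norm_sinh_lt_norm_cosh {z : ℂ} (hz : cosh z ≠ 0) :
    ‖tanh z‖ < 1 ↔ ‖sinh z‖ < ‖cosh z‖ := by
  rw [tanh_eq_sinh_div_cosh, norm_div, div_lt_one (norm_pos_iff.mpr hz)]

theorem Complex.norm_sinh_lt_norm_cosh_iff (z : ℂ) :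
    ‖sinh z‖ < ‖cosh z‖ ↔ 0 < Real.cos (2 * z.im) := by
  rw [← normSq_cosh_sub_normSq_sinh, sub_pos, normSq_eq_norm_sq, normSq_eq_norm_sq,
    pow_lt_pow_iff_left₀ (norm_nonneg _) (norm_nonneg _) two_ne_zero]

/-- `|tanh z| < 1` iff `cos (2 Im z) > 0`; in particular `|Im z| < π/4` implies
`|tanh z| < 1`. -/
theorem abs_tanh_lt_one_iff (z : ℂ) (hz : Complex.cosh z ≠ 0) :
    (‖Complex.tanh z‖ < 1 ↔ 0 < Real.cos (2 * z.im)) ∧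
    (|z.im| < Real.pi / 4 → ‖Complex.tanh z‖ < 1) := by
  have key : ‖tanh z‖ < 1 ↔ 0 < Real.cos (2 * z.im) :=
    (norm_tanh_lt_one_iff_norm_sinh_lt_norm_cosh hz).trans (norm_sinh_lt_norm_cosh_iff z)
  refine ⟨key, fun him => key.mpr (Real.cos_pos_of_mem_Ioo ?_)⟩
  obtain ⟨hlo, hhi⟩ := abs_lt.mp him
  constructor <;> linarith
end

section
/- Let E be a finite-dimensional real normed vector space, let α₁, …, α_m be continuous linear functionals on E whose span is the full dual space of E, let c > 0, and set Ω = {x ∈ E : |α_i(x)| < c for all i} and u(x) = Σ_{i=1}^m 1/(c² − (α_i(x))²). Then u is strictly convex on Ω, and for every real C the sublevel set {x ∈ Ω : u(x) ≤ C} is compact. -/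
/-!
`1 / (c² - a²)` is the convex decreasing function `t ↦ 1 / t` of the strictly concave
`c² - a²`, hence strictly convex on `(-c, c)`. Since the `αᵢ` span the dual they separate
points, so for `x ≠ y` some summand `1 / (c² - αᵢ(x)²)` is strictly convex along the segment.
The same separation makes `x ↦ (αᵢ x)ᵢ` a closed embedding. As every summand is positive, a
sublevel set `u ≤ C` lies in the compact set where all `|αᵢ x| ≤ r` for some `r < c`, on which
`u` is continuous, so it is closed there and hence compact.
-/

open Set Function

theorem ConvexOn.comp_strictConcaveOn_of_mapsTo {E : Type*} [AddCommGroup E] [Module ℝ E]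
    {s : Set E} {t : Set ℝ} {f : E → ℝ} {g : ℝ → ℝ} (hg : ConvexOn ℝ t g)
    (hf : StrictConcaveOn ℝ s f) (hg' : StrictAntiOn g t) (hst : MapsTo f s t) :
    StrictConvexOn ℝ s (g ∘ f) := by
  refine ⟨hf.1, fun x hx y hy hxy a b ha hb hab => ?_⟩
  have hmix : a • f x + b • f y ∈ t := hg.1 (hst hx) (hst hy) ha.le hb.le hab
  calc g (f (a • x + b • y)) < g (a • f x + b • f y) :=
        hg' hmix (hst (hf.1 hx hy ha.le hb.le hab)) (hf.2 hx hy hxy ha hb hab)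
    _ ≤ a • g (f x) + b • g (f y) := hg.2 (hst hx) (hst hy) ha.le hb.le hab

theorem sq_sub_sq_pos_of_mem_Ioo {a c : ℝ} (ha : a ∈ Ioo (-c) c) : 0 < c ^ 2 - a ^ 2 :=
  sub_pos.2 (sq_lt_sq' ha.1 ha.2)

theorem strictConvexOn_one_div_sq_sub_sq (c : ℝ) :
    StrictConvexOn ℝ (Ioo (-c) c) fun a => 1 / (c ^ 2 - a ^ 2) := by
  have hinv : ConvexOn ℝ (Ioi 0) fun t : ℝ => 1 / t := by
    simpa only [zpow_neg_one, one_div] using convexOn_zpow (𝕜 := ℝ) (-1)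
  have hanti : StrictAntiOn (fun t : ℝ => 1 / t) (Ioi 0) :=
    fun _ hx _ _ hxy => one_div_lt_one_div_of_lt hx hxy
  have hsq : StrictConcaveOn ℝ (Ioo (-c) c) fun a => c ^ 2 - a ^ 2 :=
    (concaveOn_const _ (convex_Ioo _ _)).sub_strictConvexOn
      ((Even.strictConvexOn_pow even_two two_ne_zero).subset (subset_univ _) (convex_Ioo _ _))
  exact hinv.comp_strictConcaveOn_of_mapsTo hsq hanti fun _ ha => sq_sub_sq_pos_of_mem_Ioo ha

theorem exists_isCompact_one_div_sq_sub_sq_le {c : ℝ} (hc : 0 < c) (C : ℝ) :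
    ∃ L ⊆ Ioo (-c) c, IsCompact L ∧ ∀ a ∈ Ioo (-c) c, 1 / (c ^ 2 - a ^ 2) ≤ C → a ∈ L := by
  set C' := max C 1
  have hC' : 0 < 1 / C' := by positivity
  refine ⟨Icc (-√(c ^ 2 - 1 / C')) √(c ^ 2 - 1 / C'), ?_, isCompact_Icc, fun a ha haC => ?_⟩
  · have hr : √(c ^ 2 - 1 / C') < c := (Real.sqrt_lt' hc).2 (by linarith)
    exact Icc_subset_Ioo (neg_lt_neg hr) hr
  · have : 1 / C' ≤ c ^ 2 - a ^ 2 := (one_div_le (sq_sub_sq_pos_of_mem_Ioo ha)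
      (by positivity)).1 (haC.trans (le_max_left _ _))
    exact abs_le.1 (Real.abs_le_sqrt (by linarith))

theorem injective_pi_apply_of_span_eq_top {ι E : Type*} [NormedAddCommGroup E]
    [NormedSpace ℝ E] {α : ι → StrongDual ℝ E} (hspan : Submodule.span ℝ (range α) = ⊤) :
    Injective fun x i => α i x := by
  intro x y hxy
  by_contra hne
  obtain ⟨f, hf⟩ := SeparatingDual.exists_separating_of_ne (R := ℝ) hne
  have hev : (ContinuousLinearMap.apply ℝ ℝ x : StrongDual ℝ E →ₗ[ℝ] ℝ) =
      ContinuousLinearMap.apply ℝ ℝ y :=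
    LinearMap.ext_on_range hspan fun i => congrFun hxy i
  exact hf (LinearMap.congr_fun hev f)

section SumComp

variable {ι E F : Type*}

theorem StrictConvexOn.sum_comp_linearMap [Fintype ι] [AddCommGroup E] [Module ℝ E]
    [AddCommGroup F] [Module ℝ F] {f : F → ℝ} {s : Set F} (hf : StrictConvexOn ℝ s f)
    {α : ι → E →ₗ[ℝ] F} (hα : Injective fun x i => α i x) :
    StrictConvexOn ℝ {x | ∀ i, α i x ∈ s} fun x => ∑ i, f (α i x) := by
  refine ⟨?_, fun x hx y hy hxy a b ha hb hab => ?_⟩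
  · rw [show {x | ∀ i, α i x ∈ s} = ⋂ i, α i ⁻¹' s by ext; simp]
    exact convex_iInter fun i => hf.1.linear_preimage (α i)
  obtain ⟨i₀, hi₀⟩ : ∃ i, α i x ≠ α i y := by
    contrapose! hxy
    exact hα (funext hxy)
  have hmix : ∀ i, α i (a • x + b • y) = a • α i x + b • α i y := fun i => by
    rw [map_add, map_smul, map_smul]
  calc ∑ i, f (α i (a • x + b • y)) < ∑ i, (a • f (α i x) + b • f (α i y)) := by
        refine Finset.sum_lt_sum (fun i _ => ?_) ⟨i₀, Finset.mem_univ _, ?_⟩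
        · rw [hmix]
          exact hf.convexOn.2 (hx i) (hy i) ha.le hb.le hab
        · rw [hmix]
          exact hf.2 (hx i₀) (hy i₀) hi₀ ha hb hab
    _ = a • ∑ i, f (α i x) + b • ∑ i, f (α i y) := by
        rw [Finset.sum_add_distrib, Finset.smul_sum, Finset.smul_sum]

variable [NormedAddCommGroup E] [NormedSpace ℝ E] [FiniteDimensional ℝ E]
  [NormedAddCommGroup F] [NormedSpace ℝ F] {α : ι → E →L[ℝ] F}

theorem isCompact_setOf_forall_apply_mem (hα : Injective fun x i => α i x) {L : Set F}
    (hL : IsCompact L) : IsCompact {x | ∀ i, α i x ∈ L} := by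
  have hemb := LinearMap.isClosedEmbedding_of_injective
    (f := (ContinuousLinearMap.pi α : E →ₗ[ℝ] ι → F)) (LinearMap.ker_eq_bot.2 hα)
  simpa [Set.pi] using hemb.isCompact_preimage (isCompact_univ_pi fun _ : ι => hL)

theorem isCompact_setOf_sum_comp_le [Fintype ι] (hα : Injective fun x i => α i x)
    {f : F → ℝ} {s : Set F} (hf : ContinuousOn f s) (hf₀ : ∀ a ∈ s, 0 ≤ f a) {C : ℝ}
    {L : Set F} (hLs : L ⊆ s) (hL : IsCompact L) (hfL : ∀ a ∈ s, f a ≤ C → a ∈ L) :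
    IsCompact {x | (∀ i, α i x ∈ s) ∧ ∑ i, f (α i x) ≤ C} := by
  have hK := isCompact_setOf_forall_apply_mem hα hL
  have hu : ContinuousOn (fun x => ∑ i, f (α i x)) {x | ∀ i, α i x ∈ L} :=
    continuousOn_finsetSum _ fun i _ =>
      (hf.mono hLs).comp (α i).continuous.continuousOn fun x hx => hx i
  have hsub : {x | (∀ i, α i x ∈ s) ∧ ∑ i, f (α i x) ≤ C} =
      {x | ∀ i, α i x ∈ L} ∩ (fun x => ∑ i, f (α i x)) ⁻¹' Iic C := by
    ext x
    refine ⟨fun ⟨hxs, hxC⟩ => ⟨fun i => hfL _ (hxs i) ?_, hxC⟩,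
      fun ⟨hxL, hxC⟩ => ⟨fun i => hLs (hxL i), hxC⟩⟩
    exact (Finset.single_le_sum (fun j _ => hf₀ _ (hxs j)) (Finset.mem_univ i)).trans hxC
  rw [hsub]
  exact hK.of_isClosed_subset (hu.preimage_isClosed_of_isClosed hK.isClosed isClosed_Iic)
    inter_subset_left

end SumComp

/-- The function `u(x) = Σᵢ 1/(c² − αᵢ(x)²)` is strictly convex on
`Ω = {x : |αᵢ(x)| < c ∀ i}` and its sublevel sets in `Ω` are compact. -/
theorem exhaustion_strictly_convex
    {E : Type*} [NormedAddCommGroup E] [NormedSpace ℝ E] [FiniteDimensional ℝ E]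
    {m : ℕ} (α : Fin m → E →L[ℝ] ℝ)
    (hspan : Submodule.span ℝ (Set.range α) = ⊤)
    (c : ℝ) (hc : 0 < c) :
    StrictConvexOn ℝ {x : E | ∀ i, |α i x| < c}
      (fun x : E => ∑ i : Fin m, 1 / (c ^ 2 - (α i x) ^ 2)) ∧
    ∀ C : ℝ, IsCompact {x : E | (∀ i, |α i x| < c) ∧
      (∑ i : Fin m, 1 / (c ^ 2 - (α i x) ^ 2)) ≤ C} := by
  have hα := injective_pi_apply_of_span_eq_top hspan
  simp only [abs_lt, ← mem_Ioo]
  have hconvex := (strictConvexOn_one_div_sq_sub_sq c).sum_comp_linearMap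
    (α := fun i => (α i : E →ₗ[ℝ] ℝ)) hα
  refine ⟨by simpa only [ContinuousLinearMap.coe_coe] using hconvex, fun C => ?_⟩
  obtain ⟨L, hLs, hL, hfL⟩ := exists_isCompact_one_div_sq_sub_sq_le hc C
  exact isCompact_setOf_sum_comp_le (α := α) (f := fun a => 1 / (c ^ 2 - a ^ 2)) hα
    (continuousOn_const.div (by fun_prop) fun _ ha => (sq_sub_sq_pos_of_mem_Ioo ha).ne')
    (fun _ ha => (one_div_pos.2 (sq_sub_sq_pos_of_mem_Ioo ha)).le) hLs hL hfL
end
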